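/- Weighted pointwise estimate for the loss (collision frequency) term: Let 0 ≤ κ ≤ 1 and let q₀ be a measurable angular kernel with 0 ≤ q₀ ≤ C_q. For every pair 0 < ϑ′ < ϑ < 1/4 with ϑ < 2ϑ′ there exist constants C > 0 and c > 0, depending only on ϑ, ϑ′, κ, C_q, such that for all measurable g, h : ℝ³ → ℝ with ‖e^{2ϑ′|·|²} h‖_{L^∞} < ∞ and all v ∈ ℝ³: e^{ϑ|v|²} |ν(√μ g)(v)| |h(v)| ≤ C ‖e^{2ϑ′|·|²} h‖_{L^∞} ∫_{ℝ³} e^{−c|v−u|²} |v−u|^{κ−2} |g(u)| du. -/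

import Mathlib

open MeasureTheory Real Set
noncomputable section

abbrev E3 := EuclideanSpace ℝ (Fin 3)

/-- The global Maxwellian `μ(v) = (2π)^{-3/2} exp(-|v|²/2)`. -/
def maxwellian (v : E3) : ℝ := (2 * π) ^ (-(3 : ℝ) / 2) * Real.exp (-‖v‖ ^ 2 / 2)

/-- The collision frequency `ν(√μ g)(v) = ∫∫ |v−u|^κ q₀((v−u)/|v−u|·ω) √μ(u) g(u) dω du`,
with angular integration w.r.t. the surface (2-Hausdorff) measure on `S²`. -/
def nuColl (κ : ℝ) (q₀ : ℝ → ℝ) (g : E3 → ℝ) (v : E3) : ℝ :=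
  ∫ u : E3, ∫ ω in Metric.sphere (0 : E3) 1,
    ‖v - u‖ ^ κ * q₀ ((inner ℝ (‖v - u‖⁻¹ • (v - u)) ω : ℝ)) *
      Real.sqrt (maxwellian u) * g u ∂(μH[2])

/-!
The surface measure on `S²` is invariant under reflections, so the angular integral
`∫_{S²} q₀(e·ω) dω` is the same constant `J` for every unit vector `e`, and
`ν(√μ g)(v) = J ∫ |v-u|^κ √μ(u) g(u) du`. The weight splits as
`e^{ϑ|v|²} |h(v)| ≤ ‖e^{2ϑ'|·|²} h‖_∞ e^{-δ|v|²}` with `δ = 2ϑ' - ϑ > 0`, and the Gaussians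
`e^{-δ|v|²} e^{-|u|²/4}` dominate `|v-u|^{-2} e^{-c|v-u|²}` up to a constant, because
`|v-u|² ≤ 2|v|² + 2|u|²` and `t e^{-t} ≤ 1`.
-/

open Metric

section SphereIntegral

variable {E F : Type*} [NormedAddCommGroup E] [InnerProductSpace ℝ E] [MeasurableSpace E]
  [BorelSpace E] [NormedAddCommGroup F] [NormedSpace ℝ F]

theorem LinearIsometryEquiv.setIntegral_sphere_comp (R : E ≃ₗᵢ[ℝ] E) (f : E → F) (d r : ℝ) :
    ∫ ω in sphere (0 : E) r, f (R ω) ∂μH[d] = ∫ ω in sphere (0 : E) r, f ω ∂μH[d] := by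
  have hpre : R.toIsometryEquiv ⁻¹' sphere 0 r = sphere 0 r := by ext; simp
  rw [← (R.toIsometryEquiv.measurePreserving_hausdorffMeasure d).setIntegral_preimage_emb
    R.toHomeomorph.measurableEmbedding f, hpre]
  rfl

theorem setIntegral_sphere_inner_eq_of_norm_eq (f : ℝ → F) {e e' : E} (h : ‖e‖ = ‖e'‖)
    (d r : ℝ) :
    ∫ ω in sphere (0 : E) r, f (inner ℝ e' ω) ∂μH[d] =
      ∫ ω in sphere (0 : E) r, f (inner ℝ e ω) ∂μH[d] := by
  set R := Submodule.reflection (ℝ ∙ (e - e'))ᗮ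
  have hR : ∀ ω, inner ℝ e' ω = inner ℝ e (R ω) := fun ω => by
    rw [← Submodule.reflection_sub h, LinearIsometryEquiv.inner_map_eq_flip,
      Submodule.reflection_symm]
  simp_rw [hR]
  exact R.setIntegral_sphere_comp (fun ω => f (inner ℝ e ω)) d r

end SphereIntegral

theorem sq_norm_sub_mul_exp_le {E : Type*} [SeminormedAddCommGroup E] {δ c : ℝ} (hδ : 0 < δ)
    (hc₀ : 0 ≤ c) (hcδ : c ≤ δ / 4) (hc : c ≤ 1 / 16) (x y : E) :
    ‖x - y‖ ^ 2 * (exp (-δ * ‖x‖ ^ 2) * exp (-‖y‖ ^ 2 / 4)) ≤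
      max (4 / δ) 16 * exp (-c * ‖x - y‖ ^ 2) := by
  set M := max (4 / δ) 16
  set t := δ / 2 * ‖x‖ ^ 2 + ‖y‖ ^ 2 / 8 with ht_def
  have hsq : ‖x - y‖ ^ 2 ≤ 2 * ‖x‖ ^ 2 + 2 * ‖y‖ ^ 2 := by
    nlinarith [norm_sub_le x y, norm_nonneg (x - y), sq_nonneg (‖x‖ - ‖y‖)]
  have hexp : -δ * ‖x‖ ^ 2 - ‖y‖ ^ 2 / 4 + c * ‖x - y‖ ^ 2 ≤ -t := by
    nlinarith [mul_le_mul_of_nonneg_left hsq hc₀, mul_le_mul_of_nonneg_right hcδ (sq_nonneg ‖x‖),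
      mul_le_mul_of_nonneg_right hc (sq_nonneg ‖y‖), ht_def]
  have hMδ : 2 ≤ M * (δ / 2) := by
    have := mul_le_mul_of_nonneg_right (le_max_left (4 / δ) 16) (half_pos hδ).le
    rwa [show 4 / δ * (δ / 2) = 2 by field_simp; norm_num] at this
  have hsqt : ‖x - y‖ ^ 2 ≤ M * t := by
    nlinarith [mul_le_mul_of_nonneg_right hMδ (sq_nonneg ‖x‖),
      mul_le_mul_of_nonneg_right (le_max_right (4 / δ) 16) (sq_nonneg ‖y‖), ht_def]
  have ht : t * exp (-t) ≤ 1 :=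
    (Real.mul_exp_neg_le_exp_neg_one t).trans (exp_le_one_iff.2 (by norm_num))
  have hM : 0 ≤ M := (by norm_num : (0 : ℝ) ≤ 16).trans (le_max_right _ _)
  calc ‖x - y‖ ^ 2 * (exp (-δ * ‖x‖ ^ 2) * exp (-‖y‖ ^ 2 / 4))
      = ‖x - y‖ ^ 2 * exp (-δ * ‖x‖ ^ 2 - ‖y‖ ^ 2 / 4 + c * ‖x - y‖ ^ 2) *
          exp (-c * ‖x - y‖ ^ 2) := by
        rw [mul_assoc, ← exp_add, ← exp_add]; ring_nf
    _ ≤ M * t * exp (-t) * exp (-c * ‖x - y‖ ^ 2) := by gcongr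
    _ ≤ M * exp (-c * ‖x - y‖ ^ 2) := by gcongr; nlinarith

def angularIntegral (q₀ : ℝ → ℝ) : ℝ :=
  ∫ ω in sphere (0 : E3) 1, q₀ (inner ℝ (EuclideanSpace.single 0 1 : E3) ω) ∂μH[2]

theorem setIntegral_sphere_collision_integrand (κ : ℝ) (q₀ : ℝ → ℝ) (g : E3 → ℝ) {u v : E3}
    (huv : u ≠ v) :
    ∫ ω in sphere (0 : E3) 1,
      ‖v - u‖ ^ κ * q₀ ((inner ℝ (‖v - u‖⁻¹ • (v - u)) ω : ℝ)) *
        Real.sqrt (maxwellian u) * g u ∂(μH[2]) =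
      ‖v - u‖ ^ κ * Real.sqrt (maxwellian u) * g u * angularIntegral q₀ := by
  have hvu : ‖v - u‖ ≠ 0 := norm_ne_zero_iff.2 (sub_ne_zero.2 huv.symm)
  have hunit : ‖(EuclideanSpace.single 0 1 : E3)‖ = ‖‖v - u‖⁻¹ • (v - u)‖ := by
    rw [norm_smul, norm_inv, norm_norm, inv_mul_cancel₀ hvu]; simp
  rw [angularIntegral, ← setIntegral_sphere_inner_eq_of_norm_eq q₀ hunit, ← integral_const_mul]
  congr 1 with ω
  ring

theorem sqrt_maxwellian (u : E3) :
    Real.sqrt (maxwellian u) = Real.sqrt ((2 * π) ^ (-(3 : ℝ) / 2)) * exp (-‖u‖ ^ 2 / 4) := by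
  rw [maxwellian, Real.sqrt_mul (by positivity),
    show -‖u‖ ^ 2 / 2 = -‖u‖ ^ 2 / 4 + -‖u‖ ^ 2 / 4 by ring, exp_add,
    Real.sqrt_mul_self (exp_pos _).le]

theorem exp_mul_sqrt_maxwellian_mul_rpow_le {δ c : ℝ} (hδ : 0 < δ) (hc₀ : 0 ≤ c)
    (hcδ : c ≤ δ / 4) (hc : c ≤ 1 / 16) (κ : ℝ) {u v : E3} (huv : u ≠ v) :
    exp (-δ * ‖v‖ ^ 2) * Real.sqrt (maxwellian u) * ‖v - u‖ ^ κ ≤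
      Real.sqrt ((2 * π) ^ (-(3 : ℝ) / 2)) * max (4 / δ) 16 *
        (exp (-c * ‖v - u‖ ^ 2) * ‖v - u‖ ^ (κ - 2)) := by
  have hvu : 0 < ‖v - u‖ := norm_pos_iff.2 (sub_ne_zero.2 huv.symm)
  have hκ : ‖v - u‖ ^ κ = ‖v - u‖ ^ (κ - 2) * ‖v - u‖ ^ 2 := by
    rw [← Real.rpow_natCast, ← Real.rpow_add hvu]; norm_num
  calc exp (-δ * ‖v‖ ^ 2) * Real.sqrt (maxwellian u) * ‖v - u‖ ^ κ
      = Real.sqrt ((2 * π) ^ (-(3 : ℝ) / 2)) * ‖v - u‖ ^ (κ - 2) *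
          (‖v - u‖ ^ 2 * (exp (-δ * ‖v‖ ^ 2) * exp (-‖u‖ ^ 2 / 4))) := by
        rw [sqrt_maxwellian, hκ]; ring
    _ ≤ Real.sqrt ((2 * π) ^ (-(3 : ℝ) / 2)) * ‖v - u‖ ^ (κ - 2) *
          (max (4 / δ) 16 * exp (-c * ‖v - u‖ ^ 2)) :=
        mul_le_mul_of_nonneg_left (sq_norm_sub_mul_exp_le hδ hc₀ hcδ hc v u) (by positivity)
    _ = _ := by ring

theorem abs_setIntegral_sphere_collision_integrand_mul_exp_le {δ c : ℝ} (hδ : 0 < δ)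
    (hc₀ : 0 ≤ c) (hcδ : c ≤ δ / 4) (hc : c ≤ 1 / 16) (κ : ℝ) (q₀ : ℝ → ℝ) (g : E3 → ℝ)
    {u v : E3} (huv : u ≠ v) :
    |∫ ω in sphere (0 : E3) 1,
      ‖v - u‖ ^ κ * q₀ ((inner ℝ (‖v - u‖⁻¹ • (v - u)) ω : ℝ)) *
        Real.sqrt (maxwellian u) * g u ∂(μH[2])| * exp (-δ * ‖v‖ ^ 2) ≤
      |angularIntegral q₀| * (Real.sqrt ((2 * π) ^ (-(3 : ℝ) / 2)) * max (4 / δ) 16) *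
        (exp (-c * ‖v - u‖ ^ 2) * ‖v - u‖ ^ (κ - 2) * |g u|) := by
  rw [setIntegral_sphere_collision_integrand κ q₀ g huv, abs_mul, abs_mul, abs_mul,
    abs_of_nonneg (Real.rpow_nonneg (norm_nonneg _) _), abs_of_nonneg (Real.sqrt_nonneg _)]
  calc ‖v - u‖ ^ κ * Real.sqrt (maxwellian u) * |g u| * |angularIntegral q₀| *
        exp (-δ * ‖v‖ ^ 2)
      = |angularIntegral q₀| * |g u| *
          (exp (-δ * ‖v‖ ^ 2) * Real.sqrt (maxwellian u) * ‖v - u‖ ^ κ) := by ring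
    _ ≤ |angularIntegral q₀| * |g u| * (Real.sqrt ((2 * π) ^ (-(3 : ℝ) / 2)) *
          max (4 / δ) 16 * (exp (-c * ‖v - u‖ ^ 2) * ‖v - u‖ ^ (κ - 2))) :=
        mul_le_mul_of_nonneg_left
          (exp_mul_sqrt_maxwellian_mul_rpow_le hδ hc₀ hcδ hc κ huv) (by positivity)
    _ = _ := by ring

theorem ofReal_abs_integral_mul_le {α : Type*} [MeasurableSpace α] {μ : Measure α}
    {F G : α → ℝ} {w K : ℝ} (hK : 0 ≤ K) (h : ∀ᵐ x ∂μ, |F x| * w ≤ K * G x) :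
    ENNReal.ofReal (|∫ x, F x ∂μ| * w) ≤ ENNReal.ofReal K * ∫⁻ x, ENNReal.ofReal (G x) ∂μ := by
  calc ENNReal.ofReal (|∫ x, F x ∂μ| * w) = ‖∫ x, F x ∂μ‖ₑ * ENNReal.ofReal w := by
        rw [ENNReal.ofReal_mul (abs_nonneg _), Real.enorm_eq_ofReal_abs]
    _ ≤ (∫⁻ x, ‖F x‖ₑ ∂μ) * ENNReal.ofReal w := by
        gcongr; exact enorm_integral_le_lintegral_enorm _
    _ = ∫⁻ x, ENNReal.ofReal (|F x| * w) ∂μ := by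
        rw [← lintegral_mul_const' _ _ ENNReal.ofReal_ne_top]
        simp_rw [Real.enorm_eq_ofReal_abs, ENNReal.ofReal_mul (abs_nonneg _)]
    _ ≤ ∫⁻ x, ENNReal.ofReal K * ENNReal.ofReal (G x) ∂μ := by
        refine lintegral_mono_ae (h.mono fun x hx => ?_)
        rw [← ENNReal.ofReal_mul hK]
        exact ENNReal.ofReal_le_ofReal hx
    _ = ENNReal.ofReal K * ∫⁻ x, ENNReal.ofReal (G x) ∂μ :=
        lintegral_const_mul' _ _ ENNReal.ofReal_ne_top

theorem loss_term_weighted_estimate_general (κ : ℝ) (q₀ : ℝ → ℝ) (ϑ ϑ' : ℝ) (hϑ2 : ϑ < 2 * ϑ') :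
    ∃ C > (0 : ℝ), ∃ c > (0 : ℝ), ∀ g h : E3 → ℝ, Measurable g → Measurable h →
      ∀ Mh : ℝ, (∀ v : E3, Real.exp (2 * ϑ' * ‖v‖ ^ 2) * |h v| ≤ Mh) →
      ∀ v : E3,
        ENNReal.ofReal (Real.exp (ϑ * ‖v‖ ^ 2) * |nuColl κ q₀ g v| * |h v|) ≤
          ENNReal.ofReal (C * Mh) *
            ∫⁻ u : E3, ENNReal.ofReal
              (Real.exp (-c * ‖v - u‖ ^ 2) * ‖v - u‖ ^ (κ - 2) * |g u|) := by
  set δ := 2 * ϑ' - ϑ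
  have hδ : 0 < δ := sub_pos.2 hϑ2
  set K := |angularIntegral q₀| * (Real.sqrt ((2 * π) ^ (-(3 : ℝ) / 2)) * max (4 / δ) 16)
  have hK : 0 ≤ K := by positivity
  set c := min (δ / 4) (1 / 16)
  refine ⟨K + 1, by positivity, c, by positivity,
    fun g h _ _ Mh hh v => ?_⟩
  have hMh : 0 ≤ Mh := (by positivity : 0 ≤ exp (2 * ϑ' * ‖(0 : E3)‖ ^ 2) * |h 0|).trans (hh 0)
  have weight : exp (ϑ * ‖v‖ ^ 2) * |h v| ≤ exp (-δ * ‖v‖ ^ 2) * Mh := by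
    rw [show ϑ * ‖v‖ ^ 2 = -δ * ‖v‖ ^ 2 + 2 * ϑ' * ‖v‖ ^ 2 by ring, exp_add, mul_assoc]
    exact mul_le_mul_of_nonneg_left (hh v) (exp_pos _).le
  calc ENNReal.ofReal (exp (ϑ * ‖v‖ ^ 2) * |nuColl κ q₀ g v| * |h v|)
      ≤ ENNReal.ofReal (|nuColl κ q₀ g v| * (exp (-δ * ‖v‖ ^ 2) * Mh)) := by
        rw [mul_right_comm, mul_comm]; gcongr
    _ ≤ _ := by
        refine ofReal_abs_integral_mul_le (by positivity) ?_
        filter_upwards [volume.ae_ne v] with u huv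
        have hG : 0 ≤ exp (-c * ‖v - u‖ ^ 2) * ‖v - u‖ ^ (κ - 2) * |g u| := by positivity
        have hI := abs_setIntegral_sphere_collision_integrand_mul_exp_le hδ (by positivity)
          (min_le_left _ _) (min_le_right _ _) κ q₀ g huv
        rw [← mul_assoc]
        calc _ ≤ K * _ * Mh := mul_le_mul_of_nonneg_right hI hMh
          _ ≤ (K + 1) * Mh * _ := by nlinarith [mul_nonneg hMh hG]

/-- Weighted pointwise estimate for the loss (collision frequency) term: for
`0 ≤ κ ≤ 1`, `0 ≤ q₀ ≤ C_q`, and `0 < ϑ′ < ϑ < 1/4` with `ϑ < 2ϑ′`, one has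
`e^{ϑ|v|²}|ν(√μ g)(v)||h(v)| ≤ C ‖e^{2ϑ′|·|²}h‖_∞ ∫ e^{-c|v-u|²}|v-u|^{κ-2}|g(u)| du`. -/
theorem loss_term_weighted_estimate (κ : ℝ) (hκ0 : 0 ≤ κ) (hκ1 : κ ≤ 1)
    (q₀ : ℝ → ℝ) (Cq : ℝ) (hq₀ : Measurable q₀) (hq : ∀ r, 0 ≤ q₀ r ∧ q₀ r ≤ Cq)
    (ϑ ϑ' : ℝ) (hϑ'0 : 0 < ϑ') (hϑ'ϑ : ϑ' < ϑ) (hϑ1 : ϑ < 1 / 4) (hϑ2 : ϑ < 2 * ϑ') :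
    ∃ C > (0 : ℝ), ∃ c > (0 : ℝ), ∀ g h : E3 → ℝ, Measurable g → Measurable h →
      ∀ Mh : ℝ, (∀ v : E3, Real.exp (2 * ϑ' * ‖v‖ ^ 2) * |h v| ≤ Mh) →
      ∀ v : E3,
        ENNReal.ofReal (Real.exp (ϑ * ‖v‖ ^ 2) * |nuColl κ q₀ g v| * |h v|) ≤
          ENNReal.ofReal (C * Mh) *
            ∫⁻ u : E3, ENNReal.ofReal
              (Real.exp (-c * ‖v - u‖ ^ 2) * ‖v - u‖ ^ (κ - 2) * |g u|) :=
  loss_term_weighted_estimate_general κ q₀ ϑ ϑ' hϑ2
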